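/- For k ∈ {3,4,5}, an empty k-circuit in which the spanning face f_e neighbours k pairwise different faces does not exist. -/

import Mathlib

/-- A combinatorial map (connected graph cellularly embedded in an orientable surface),
given by a set of darts `D`, the edge involution `σ` and the rotation `ρ`. -/
structure CombMap where
  D : Type
  fin : Finite D
  σ : Equiv.Perm D
  ρ : Equiv.Perm D
  σ_invol : ∀ d, σ (σ d) = d
  σ_fixfree : ∀ d, σ d ≠ d
  conn : ∀ d d' : D, ∃ g ∈ Subgroup.closure ({σ, ρ} : Set (Equiv.Perm D)), g d = d'

attribute [instance] CombMap.fin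

namespace CombMap

variable (M : CombMap)

/-- The face permutation. -/
def φ : Equiv.Perm M.D := M.ρ * M.σ

def vSetoid : Setoid M.D :=
  ⟨M.ρ.SameCycle, ⟨fun _ => Equiv.Perm.SameCycle.refl _ _,
    Equiv.Perm.SameCycle.symm, Equiv.Perm.SameCycle.trans⟩⟩

def eSetoid : Setoid M.D :=
  ⟨M.σ.SameCycle, ⟨fun _ => Equiv.Perm.SameCycle.refl _ _,
    Equiv.Perm.SameCycle.symm, Equiv.Perm.SameCycle.trans⟩⟩

def fSetoid : Setoid M.D :=
  ⟨M.φ.SameCycle, ⟨fun _ => Equiv.Perm.SameCycle.refl _ _,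
    Equiv.Perm.SameCycle.symm, Equiv.Perm.SameCycle.trans⟩⟩

/-- Vertices are orbits of `ρ`. -/
def Vertex := Quotient M.vSetoid
/-- Edges are orbits of `σ`. -/
def Edge := Quotient M.eSetoid
/-- Faces are orbits of `φ`. -/
def Face := Quotient M.fSetoid

instance : Finite M.Vertex := Quotient.finite _
instance : Finite M.Edge := Quotient.finite _
instance : Finite M.Face := Quotient.finite _

def vtx (d : M.D) : M.Vertex := Quotient.mk M.vSetoid d
def edg (d : M.D) : M.Edge := Quotient.mk M.eSetoid d
def fce (d : M.D) : M.Face := Quotient.mk M.fSetoid d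

noncomputable def nV : ℕ := Nat.card M.Vertex
noncomputable def nE : ℕ := Nat.card M.Edge
noncomputable def nF : ℕ := Nat.card M.Face

/-- The size of a face: the length of its facial walk, i.e. the number of darts in it. -/
noncomputable def faceSize (f : M.Face) : ℕ := Nat.card {d : M.D // M.fce d = f}

/-- The degree of a vertex: the number of darts emanating from it. -/
noncomputable def degree (v : M.Vertex) : ℕ := Nat.card {d : M.D // M.vtx d = v}

/-- The face excess `Σ_f (d(f) - 3)`. -/
noncomputable def faceExcess : ℤ := ∑ᶠ f : M.Face, ((M.faceSize f : ℤ) - 3)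

/-- The underlying graph of the map is simple: no loops, no multiple edges. -/
def Simple : Prop :=
  (∀ d, M.vtx d ≠ M.vtx (M.σ d)) ∧
  ∀ d d', M.vtx d = M.vtx d' → M.vtx (M.σ d) = M.vtx (M.σ d') → M.edg d = M.edg d'

/-- The dual has no loops. -/
def DualLoopFree : Prop := ∀ d, M.fce d ≠ M.fce (M.σ d)

/-- The dual is simple: no loops and no multiple edges. -/
def DualSimple : Prop :=
  M.DualLoopFree ∧
  ∀ d d', M.fce d = M.fce d' → M.fce (M.σ d) = M.fce (M.σ d') → M.edg d = M.edg d'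

/-- The underlying simple graph on the vertices of the map. -/
def graph : SimpleGraph M.Vertex :=
  SimpleGraph.fromRel (fun a b => ∃ d, M.vtx d = a ∧ M.vtx (M.σ d) = b)

/-- The underlying simple graph of the dual map, on the faces of the map. -/
def dualGraph : SimpleGraph M.Face :=
  SimpleGraph.fromRel (fun a b => ∃ d, M.fce d = a ∧ M.fce (M.σ d) = b)

/-- Vertex `v` lies on the face `f`. -/
def VertexOnFace (v : M.Vertex) (f : M.Face) : Prop := ∃ d, M.fce d = f ∧ M.vtx d = v

/-- Faces `f` and `f'` share an edge. -/
def FaceAdj (f f' : M.Face) : Prop := ∃ d, M.fce d = f ∧ M.fce (M.σ d) = f'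

end CombMap

/-- `k`-connectivity of a graph: more than `k` vertices, and removing fewer than `k`
vertices never disconnects it. -/
def KConn {α : Type} (H : SimpleGraph α) (k : ℕ) : Prop :=
  k < Nat.card α ∧ ∀ S : Set α, S.ncard < k → (H.induce Sᶜ).Connected

namespace CombMap

variable (M : CombMap)

/-- An empty `k`-circuit: a map on at most `k` vertices with a spanning face `f_e` of
size `k`, whose underlying graph is simple, whose dual has no loops, and all of whose
dual multi-edges are incident with `f_e`. -/
def IsEmptyCircuit (k : ℕ) (fe : M.Face) : Prop :=
  M.nV ≤ k ∧ M.faceSize fe = k ∧ (∀ v : M.Vertex, M.VertexOnFace v fe) ∧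
  M.Simple ∧ M.DualLoopFree ∧
  ∀ d d', M.fce d = M.fce d' → M.fce (M.σ d) = M.fce (M.σ d') → M.edg d ≠ M.edg d' →
    (M.fce d = fe ∨ M.fce (M.σ d) = fe)

/-- An empty `k`-pair: a map on at most `k` vertices with two spanning faces
`f_e, f_e'` with `d(f_e)+d(f_e') = k` not sharing an edge, whose underlying graph is
simple, whose dual has no loops, and all of whose dual multi-edges are incident with
`f_e` or `f_e'`. -/
def IsEmptyPair (k : ℕ) (fe fe' : M.Face) : Prop :=
  M.nV ≤ k ∧ fe ≠ fe' ∧ M.faceSize fe + M.faceSize fe' = k ∧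
  (∀ v : M.Vertex, M.VertexOnFace v fe ∨ M.VertexOnFace v fe') ∧
  ¬ M.FaceAdj fe fe' ∧
  M.Simple ∧ M.DualLoopFree ∧
  ∀ d d', M.fce d = M.fce d' → M.fce (M.σ d) = M.fce (M.σ d') → M.edg d ≠ M.edg d' →
    (M.fce d = fe ∨ M.fce d = fe' ∨ M.fce (M.σ d) = fe ∨ M.fce (M.σ d) = fe')

end CombMap

/-!
The darts of a simple graph on `V` vertices inject into ordered pairs of distinct vertices, so
`2E ≤ V(V - 1) ≤ k(k - 1)`. Every face has size at least 3 and there are at least `k + 1` faces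
(`f_e` and its `k` neighbours), so `2E ≥ k + 3k`. This is impossible for `k = 3, 4` and forces
`V = 5`, `E = 10`, `F = 6` for `k = 5`. But `V - E + F` is even for every orientable map:
a permutation of `n` points with `c` orbits has sign `(-1)^(n - c)`, and
`sign φ = sign ρ · sign σ`.
-/

open Finset

namespace Equiv.Perm

variable {α : Type*} [Fintype α] [DecidableEq α] (f : Perm α)

def orbitLabel (a : α) : α ⊕ Perm α :=
  if f a = a then .inl a else .inr (f.cycleOf a)

theorem orbitLabel_eq_iff {a b : α} : f.orbitLabel a = f.orbitLabel b ↔ f.SameCycle a b := by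
  unfold orbitLabel
  constructor
  · intro h
    split_ifs at h with ha hb hb
    · exact Sum.inl_injective h ▸ SameCycle.refl _ _
    · have hb' : b ∈ (f.cycleOf a).support := by
        rw [Sum.inr_injective h, mem_support_cycleOf_iff]
        exact ⟨SameCycle.refl _ _, mem_support.2 hb⟩
      exact (mem_support_cycleOf_iff.1 hb').1
  · intro h
    by_cases ha : f a = a
    · obtain rfl := h.eq_of_left ha
      rfl
    · rw [if_neg ha, if_neg (by rwa [← h.apply_eq_self_iff]), h.cycleOf_eq]

theorem image_orbitLabel :
    univ.image f.orbitLabel = ({a | f a = a} : Finset α).disjSum f.cycleFactorsFinset := by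
  ext (a | c)
  · simp only [mem_image, mem_univ, true_and, orbitLabel, inl_mem_disjSum, mem_filter]
    constructor
    · rintro ⟨b, hb⟩
      split_ifs at hb with h
      exact Sum.inl_injective hb ▸ h
    · exact fun h => ⟨a, if_pos h⟩
  · simp only [mem_image, mem_univ, true_and, orbitLabel, inr_mem_disjSum]
    constructor
    · rintro ⟨b, hb⟩
      split_ifs at hb with h
      exact Sum.inr_injective hb ▸ cycleOf_mem_cycleFactorsFinset_iff.2 (mem_support.2 h)
    · intro hc
      obtain ⟨a, ha⟩ := (mem_cycleFactorsFinset_iff.1 hc).1.nonempty_support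
      refine ⟨a, ?_⟩
      rw [if_neg (mem_support.1 (mem_cycleFactorsFinset_support_le hc ha)),
        cycle_is_cycleOf ha hc]

theorem card_quotient_sameCycle :
    Nat.card (Quotient (SameCycle.setoid f)) = #{a | f a = a} + #f.cycleFactorsFinset := by
  have hker : SameCycle.setoid f = Setoid.ker f.orbitLabel :=
    Setoid.ext fun a b => f.orbitLabel_eq_iff.symm
  rw [hker, Nat.card_congr (Setoid.quotientKerEquivRange _), Nat.card_eq_card_toFinset,
    Set.toFinset_range, image_orbitLabel, card_disjSum]

theorem sign_eq_neg_one_pow_card_add_card_quotient_sameCycle :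
    sign f = (-1) ^ (Fintype.card α + Nat.card (Quotient (SameCycle.setoid f))) := by
  have hfix : #{a | f a = a} + #f.support = Fintype.card α := by
    rw [← card_univ, ← card_filter_add_card_filter_not (s := univ) (fun a => f a = a)]
    rfl
  have hcyc : Multiset.card f.cycleType = #f.cycleFactorsFinset := by
    rw [cycleType_def, Multiset.card_map]; rfl
  rw [sign_of_cycleType, sum_cycleType, hcyc, card_quotient_sameCycle, ← hfix, add_add_add_comm,
    ← two_mul, pow_add _ (2 * _), pow_mul, neg_one_sq, one_pow, one_mul]

end Equiv.Perm

theorem Nat.card_eq_sum_card_fiber {α β : Type*} [Finite α] [Fintype β] (g : α → β) :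
    Nat.card α = ∑ b, Nat.card {a // g a = b} := by
  rw [← Nat.card_sigma]
  exact Nat.card_congr (Equiv.sigmaFiberEquiv g).symm

namespace CombMap

open Equiv.Perm

variable (M : CombMap)

theorem sameCycle_σ_iff {d d' : M.D} : M.σ.SameCycle d d' ↔ d' = d ∨ d' = M.σ d := by
  have hinv : Function.Involutive M.σ := M.σ_invol
  constructor
  · intro h
    obtain ⟨n, rfl⟩ := h.exists_nat_pow_eq
    rw [coe_pow]
    rcases n.even_or_odd with hn | hn
    · exact .inl (by rw [hinv.iterate_even hn, id])
    · exact .inr (by rw [hinv.iterate_odd hn])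
  · rintro (rfl | rfl)
    · exact SameCycle.refl _ _
    · exact sameCycle_apply_right.2 (SameCycle.refl _ _)

theorem edg_eq_edg_iff {d d' : M.D} : M.edg d' = M.edg d ↔ d' = d ∨ d' = M.σ d :=
  Quotient.eq.trans (sameCycle_comm.trans M.sameCycle_σ_iff)

theorem vtx_φ (d : M.D) : M.vtx (M.φ d) = M.vtx (M.σ d) :=
  Quotient.sound (sameCycle_apply_left.2 (SameCycle.refl _ _))

theorem fce_φ (d : M.D) : M.fce (M.φ d) = M.fce d :=
  Quotient.sound (sameCycle_apply_left.2 (SameCycle.refl _ _))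

theorem card_darts_eq_two_mul_nE : Nat.card M.D = 2 * M.nE := by
  let := Fintype.ofFinite M.Edge
  have hfiber (e : M.Edge) : Nat.card {d // M.edg d = e} = 2 := by
    obtain ⟨d, rfl⟩ : ∃ d, M.edg d = e := Quotient.exists_rep e
    have hset : {d' | M.edg d' = M.edg d} = {d, M.σ d} := Set.ext fun _ => M.edg_eq_edg_iff
    rw [← Set.coe_ofPred, Nat.card_coe_set_eq, hset, Set.ncard_pair (M.σ_fixfree d).symm]
  rw [Nat.card_eq_sum_card_fiber M.edg, Finset.sum_congr rfl fun e _ => hfiber e, sum_const,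
    card_univ, smul_eq_mul, mul_comm, nE, Nat.card_eq_fintype_card]

theorem even_nV_add_nE_add_nF : Even (M.nV + M.nE + M.nF) := by
  classical
  let := Fintype.ofFinite M.D
  have hsign : sign M.φ = sign M.ρ * sign M.σ := map_mul _ _ _
  simp only [sign_eq_neg_one_pow_card_add_card_quotient_sameCycle, ← pow_add] at hsign
  change (-1 : ℤˣ) ^ (_ + M.nF) = (-1) ^ (_ + M.nV + (_ + M.nE)) at hsign
  have hunit : (-1 : ℤˣ) ^ (Fintype.card M.D + M.nV + (Fintype.card M.D + M.nE) +
      (Fintype.card M.D + M.nF)) = 1 := by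
    rw [pow_add, ← hsign, Int.units_mul_self]
  have hD : Fintype.card M.D = 2 * M.nE := by
    rw [← Nat.card_eq_fintype_card, card_darts_eq_two_mul_nE]
  rw [neg_one_pow_eq_one_iff_even (by decide), hD] at hunit
  rw [show 2 * M.nE + M.nV + (2 * M.nE + M.nE) + (2 * M.nE + M.nF) =
    M.nV + M.nE + M.nF + 2 * (3 * M.nE) by ring] at hunit
  exact (Nat.even_add.1 hunit).2 (even_two_mul _)

variable {M}

theorem φ_apply_ne (hs : M.Simple) (d : M.D) : M.φ d ≠ d := fun h =>
  hs.1 d (by rw [← vtx_φ, h])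

theorem φ_φ_apply_ne (hs : M.Simple) (hd : M.DualLoopFree) (d : M.D) : M.φ (M.φ d) ≠ d := by
  intro h
  -- `d` and `σ (φ d)` both run from `vtx d` to `vtx (φ d)`, so they lie on one edge.
  have hvtx : M.vtx d = M.vtx (M.σ (M.φ d)) := by
    conv_lhs => rw [← h, vtx_φ]
  have hvtx' : M.vtx (M.σ d) = M.vtx (M.σ (M.σ (M.φ d))) := by
    rw [M.σ_invol, vtx_φ]
  rcases M.edg_eq_edg_iff.1 (hs.2 _ _ hvtx hvtx').symm with h' | h'
  · have hφ : M.φ d = M.σ d := M.σ.injective (by rw [h', M.σ_invol])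
    exact hd d ((M.fce_φ d).symm.trans (congrArg M.fce hφ))
  · exact φ_apply_ne hs d (M.σ.injective h')

theorem three_le_faceSize (hs : M.Simple) (hd : M.DualLoopFree) (f : M.Face) :
    3 ≤ M.faceSize f := by
  obtain ⟨d, rfl⟩ : ∃ d, M.fce d = f := Quotient.exists_rep f
  have htriple : ({d, M.φ d, M.φ (M.φ d)} : Set M.D).ncard = 3 :=
    Set.ncard_eq_three.2 ⟨d, M.φ d, M.φ (M.φ d), (φ_apply_ne hs d).symm,
      (φ_φ_apply_ne hs hd d).symm, (φ_apply_ne hs (M.φ d)).symm, rfl⟩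
  calc 3 = _ := htriple.symm
    _ ≤ {d' | M.fce d' = M.fce d}.ncard :=
      Set.ncard_le_ncard (by rintro _ (rfl | rfl | rfl) <;> simp [fce_φ])
    _ = M.faceSize (M.fce d) := (Nat.card_coe_set_eq _).symm

theorem faceSize_add_three_mul_le (hs : M.Simple) (hd : M.DualLoopFree) (fe : M.Face) :
    M.faceSize fe + 3 * (M.nF - 1) ≤ Nat.card M.D := by
  classical
  let := Fintype.ofFinite M.Face
  have hothers : 3 * (M.nF - 1) ≤ ∑ f ∈ univ.erase fe, M.faceSize f := by
    have := card_nsmul_le_sum (univ.erase fe) M.faceSize 3 fun f _ => three_le_faceSize hs hd f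
    rwa [smul_eq_mul, card_erase_of_mem (mem_univ fe), card_univ, ← Nat.card_eq_fintype_card,
      mul_comm] at this
  rw [Nat.card_eq_sum_card_fiber M.fce, ← add_sum_erase _ _ (mem_univ fe)]
  exact Nat.add_le_add_left hothers _

theorem card_darts_add_nV_le (hs : M.Simple) : Nat.card M.D + M.nV ≤ M.nV * M.nV := by
  have hinj : Function.Injective
      (Sum.elim (fun d => (M.vtx d, M.vtx (M.σ d))) (fun v => (v, v)) :
        M.D ⊕ M.Vertex → M.Vertex × M.Vertex) := by
    rintro (d | v) (d' | v') h <;> simp only [Sum.elim_inl, Sum.elim_inr, Prod.mk.injEq] at h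
    · rcases M.edg_eq_edg_iff.1 (hs.2 d d' h.1 h.2).symm with rfl | rfl
      · rfl
      · exact absurd h.1 (hs.1 d)
    · exact absurd (h.1.trans h.2.symm) (hs.1 d)
    · exact absurd (h.1.symm.trans h.2) (hs.1 d')
    · exact congrArg Sum.inr h.1
  calc Nat.card M.D + M.nV = Nat.card (M.D ⊕ M.Vertex) := Nat.card_sum.symm
    _ ≤ Nat.card (M.Vertex × M.Vertex) := Nat.card_le_card_of_injective _ hinj
    _ = M.nV * M.nV := Nat.card_prod _ _

theorem card_faceAdj_lt_nF (hd : M.DualLoopFree) (fe : M.Face) :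
    Nat.card {f // M.FaceAdj fe f} < M.nF :=
  Finite.card_subtype_lt fun ⟨d, h, h'⟩ => hd d (h.trans h'.symm)

end CombMap

/-- For `k ∈ {3,4,5}`, there is no empty `k`-circuit whose spanning face `f_e`
neighbours `k` pairwise different faces. -/
theorem no_small_empty_circuit_with_distinct_neighbours
    (M : CombMap) (k : ℕ) (hk : k ∈ ({3, 4, 5} : Set ℕ)) (fe : M.Face)
    (hcirc : M.IsEmptyCircuit k fe)
    (hnbrs : Nat.card {f : M.Face // M.FaceAdj fe f} = k) :
    False := by
  obtain ⟨hV, hfe, -, hs, hd, -⟩ := hcirc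
  have hdarts := M.card_darts_add_nV_le hs
  have hfaces := M.faceSize_add_three_mul_le hs hd fe
  have hnF := M.card_faceAdj_lt_nF hd fe
  have hE := M.card_darts_eq_two_mul_nE
  obtain ⟨r, hχ⟩ := M.even_nV_add_nE_add_nF
  rw [hfe] at hfaces
  rw [hnbrs] at hnF
  simp only [Set.mem_insert_iff, Set.mem_singleton_iff] at hk
  rcases hk with rfl | rfl | rfl <;> interval_cases M.nV <;> omega
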